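/- For any graph G, bip(G) ≤ DOM(G □ K₂) ≤ n(G), where bip(G) is the maximum order of a bipartite induced subgraph of G. In particular, if G is bipartite then DOM(G □ K₂) = n(G). -/

import Mathlib

open SimpleGraph

variable {V : Type*}

/-- `D` is an orientation of the simple graph `G`: arcs only along edges, and each edge
gets exactly one of its two possible directions. -/
def IsOrientation (G : SimpleGraph V) (D : V → V → Prop) : Prop :=
  (∀ u v, D u v → G.Adj u v) ∧ (∀ u v, G.Adj u v → (D u v ↔ ¬ D v u))

/-- `S` is a dominating set of the digraph `D`. -/
def IsDomSet (D : V → V → Prop) (S : Finset V) : Prop :=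
  ∀ v, v ∉ S → ∃ u ∈ S, D u v

/-- Domination number of a digraph. -/
noncomputable def domNum (D : V → V → Prop) : ℕ :=
  sInf {n | ∃ S : Finset V, S.card = n ∧ IsDomSet D S}

/-- Orientable domination number of a graph. -/
noncomputable def DOM (G : SimpleGraph V) : ℕ :=
  sSup {n | ∃ D : V → V → Prop, IsOrientation G D ∧ domNum D = n}

/-- Independence number. -/
noncomputable def indepNum (G : SimpleGraph V) : ℕ :=
  sSup {n | ∃ S : Finset V, S.card = n ∧ ∀ u ∈ S, ∀ v ∈ S, ¬ G.Adj u v}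

/-- Matching number. -/
noncomputable def matchNum (G : SimpleGraph V) : ℕ :=
  sSup {n | ∃ M : Finset (Sym2 V), M.card = n ∧ (∀ e ∈ M, e ∈ G.edgeSet) ∧
    ∀ e ∈ M, ∀ f ∈ M, e ≠ f → ∀ v, v ∈ e → v ∉ f}

/-- Maximum order of a bipartite induced subgraph. -/
noncomputable def bipNum (G : SimpleGraph V) : ℕ :=
  sSup {n | ∃ s : Finset V, s.card = n ∧ (G.induce (s : Set V)).Colorable 2}

/-- Join of `G` with a single universal vertex (`none`). -/
def joinK1 (G : SimpleGraph V) : SimpleGraph (Option V) :=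
  SimpleGraph.fromRel (fun a b => a = none ∨ ∃ u v, a = some u ∧ b = some v ∧ G.Adj u v)

/-- Lexicographic product `G ∘ H`. -/
def lexProd {W : Type*} (G : SimpleGraph V) (H : SimpleGraph W) : SimpleGraph (V × W) :=
  SimpleGraph.fromRel (fun a b => G.Adj a.1 b.1 ∨ (a.1 = b.1 ∧ H.Adj a.2 b.2))

/-- Corona `G ⊙ H`: vertex `(u, none)` is the vertex `u` of `G`, the vertices `(u, some w)`
form the copy of `H` joined to `u`. -/
def corona {W : Type*} (G : SimpleGraph V) (H : SimpleGraph W) : SimpleGraph (V × Option W) :=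
  SimpleGraph.fromRel (fun a b =>
    (a.2 = none ∧ b.2 = none ∧ G.Adj a.1 b.1) ∨
    (a.1 = b.1 ∧ ∃ w w', a.2 = some w ∧ b.2 = some w' ∧ H.Adj w w') ∨
    (a.1 = b.1 ∧ a.2 = none ∧ b.2 ≠ none))

/-- A digraph is acyclic if it has no directed cycle. -/
def DigraphAcyclic (D : V → V → Prop) : Prop :=
  ¬ ∃ (m : ℕ) (c : ℕ → V), 0 < m ∧ (∀ i < m, D (c i) (c (i + 1))) ∧ c m = c 0

/-- A packing of a digraph: no arc joins two of its vertices and no vertex has two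
out-neighbors in it. -/
def IsPacking (D : V → V → Prop) (P : Finset V) : Prop :=
  (∀ u ∈ P, ∀ v ∈ P, ¬ D u v) ∧
  (∀ u ∈ P, ∀ v ∈ P, u ≠ v → ∀ w, ¬ (D w u ∧ D w v))

/-- Packing number of a digraph. -/
noncomputable def packNum (D : V → V → Prop) : ℕ :=
  sSup {n | ∃ P : Finset V, P.card = n ∧ IsPacking D P}

/-!
Every orientation `D` of `G □ K₂` is dominated by the tails of its `n` rungs `(u, 0)(u, 1)`,
so `DOM (G □ K₂) ≤ n`. Conversely, a 2-coloring `c` of an induced subgraph `G[s]` gives the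
independent set `{(u, c u) | u ∈ s}` of `G □ K₂`; orienting every edge at it away from it makes
all its vertices sources, and sources lie in every dominating set.
-/

local notation "K₂" => (⊤ : SimpleGraph (Fin 2))

theorem exists_isOrientation_forall_not_of_isIndep (H : SimpleGraph V) (P : Set V)
    (hP : ∀ a ∈ P, ∀ b ∈ P, ¬ H.Adj a b) :
    ∃ D : V → V → Prop, IsOrientation H D ∧ ∀ a ∈ P, ∀ b, ¬ D b a := by
  refine ⟨fun a b => H.Adj a b ∧ (a ∈ P ∨ (b ∉ P ∧ WellOrderingRel a b)),
    ⟨fun _ _ h => h.1, fun u v huv => ?_⟩, fun a ha b hba => ?_⟩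
  · have htri := trichotomous_of WellOrderingRel u v
    have hasymm : WellOrderingRel u v → ¬ WellOrderingRel v u := asymm
    have hne := huv.ne
    have hPu := hP u
    have hPv := hP v
    grind [SimpleGraph.adj_symm]
  · rcases hba.2 with hb | ⟨ha', -⟩
    · exact hP b hb a ha hba.1
    · exact ha' ha

section Domination

variable {D : V → V → Prop} {S : Finset V}

theorem IsDomSet.mem_of_forall_not (hS : IsDomSet D S) {a : V} (ha : ∀ b, ¬ D b a) : a ∈ S := by
  by_contra haS
  obtain ⟨b, -, hba⟩ := hS a haS
  exact ha b hba

theorem domNum_le_card (hS : IsDomSet D S) : domNum D ≤ S.card :=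
  Nat.sInf_le ⟨S, rfl, hS⟩

theorem card_le_domNum_of_forall_not [Fintype V] {P : Finset V}
    (hP : ∀ a ∈ P, ∀ b, ¬ D b a) : P.card ≤ domNum D := by
  have hne : {n | ∃ S : Finset V, S.card = n ∧ IsDomSet D S}.Nonempty :=
    ⟨_, Finset.univ, rfl, fun v hv => absurd (Finset.mem_univ v) hv⟩
  obtain ⟨S, hcard, hS⟩ := Nat.sInf_mem hne
  rw [domNum, ← hcard]
  exact Finset.card_le_card fun a ha => hS.mem_of_forall_not (hP a ha)

theorem domNum_le_card_univ [Fintype V] (D : V → V → Prop) : domNum D ≤ Fintype.card V :=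
  domNum_le_card (S := Finset.univ) fun v hv => absurd (Finset.mem_univ v) hv

theorem domNum_le_DOM [Fintype V] {H : SimpleGraph V} (hD : IsOrientation H D) :
    domNum D ≤ DOM H :=
  le_csSup ⟨Fintype.card V, by rintro _ ⟨D', -, rfl⟩; exact domNum_le_card_univ D'⟩ ⟨D, hD, rfl⟩

theorem DOM_le {H : SimpleGraph V} {n : ℕ} (h : ∀ D, IsOrientation H D → domNum D ≤ n) :
    DOM H ≤ n :=
  csSup_le' <| by rintro _ ⟨D, hD, rfl⟩; exact h D hD

theorem card_le_DOM_of_isIndep [Fintype V] {H : SimpleGraph V} {P : Finset V}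
    (hP : ∀ a ∈ P, ∀ b ∈ P, ¬ H.Adj a b) : P.card ≤ DOM H := by
  obtain ⟨D, hD, hsrc⟩ := exists_isOrientation_forall_not_of_isIndep H P hP
  exact (card_le_domNum_of_forall_not hsrc).trans (domNum_le_DOM hD)

end Domination

section Prism

variable (G : SimpleGraph V)

theorem domNum_le_card_of_isOrientation_boxProd [Fintype V] {D : V × Fin 2 → V × Fin 2 → Prop}
    (hD : IsOrientation (G □ K₂) D) : domNum D ≤ Fintype.card V := by
  classical
  let tail : V → Fin 2 := fun u => if D (u, 0) (u, 1) then 0 else 1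
  let S := Finset.univ.map ⟨fun u => (u, tail u), fun _ _ h => congrArg Prod.fst h⟩
  have hrung : ∀ u, D (u, tail u) (u, 1 - tail u) := by
    intro u
    have hadj : (G □ K₂).Adj (u, 0) (u, 1) := by simp [boxProd_adj]
    by_cases h : D (u, 0) (u, 1)
    · simp [tail, h]
    · simpa [tail, h] using (hD.2 _ _ hadj).not_left.mp h
  have hS : IsDomSet D S := by
    rintro ⟨u, i⟩ hu
    have hmem : (u, tail u) ∈ S := Finset.mem_map_of_mem _ (Finset.mem_univ u)
    refine ⟨(u, tail u), hmem, ?_⟩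
    have hi : i = 1 - tail u := by
      have : i ≠ tail u := by rintro rfl; exact hu hmem
      omega
    exact hi ▸ hrung u
  simpa [S] using domNum_le_card hS

theorem DOM_boxProd_le_card [Fintype V] : DOM (G □ K₂) ≤ Fintype.card V :=
  DOM_le fun _ hD => domNum_le_card_of_isOrientation_boxProd G hD

theorem card_le_DOM_boxProd_of_colorable_induce [Fintype V] (s : Finset V)
    (hs : (G.induce (s : Set V)).Colorable 2) : s.card ≤ DOM (G □ K₂) := by
  classical
  obtain ⟨C⟩ := hs
  let c : V → Fin 2 := fun v => if h : v ∈ s then C ⟨v, h⟩ else 0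
  let P := s.map ⟨fun u => (u, c u), fun _ _ h => congrArg Prod.fst h⟩
  have hP : ∀ a ∈ P, ∀ b ∈ P, ¬ (G □ K₂).Adj a b := by
    simp only [P, Finset.mem_map]
    rintro _ ⟨u, hu, rfl⟩ _ ⟨v, hv, rfl⟩ (⟨huv, hc⟩ | ⟨hne, rfl⟩)
    · exact C.valid (show (G.induce (s : Set V)).Adj ⟨u, hu⟩ ⟨v, hv⟩ from huv)
        (by simpa [c, hu, hv] using hc)
    · exact hne.ne rfl
  simpa [P] using card_le_DOM_of_isIndep hP

end Prism

theorem stmt16 {V : Type*} [Fintype V] (G : SimpleGraph V) :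
    bipNum G ≤ DOM (G □ (⊤ : SimpleGraph (Fin 2))) ∧
    DOM (G □ (⊤ : SimpleGraph (Fin 2))) ≤ Fintype.card V ∧
    (G.Colorable 2 → DOM (G □ (⊤ : SimpleGraph (Fin 2))) = Fintype.card V) := by
  refine ⟨csSup_le' ?_, DOM_boxProd_le_card G, fun hG => ?_⟩
  · rintro _ ⟨s, rfl, hs⟩
    exact card_le_DOM_boxProd_of_colorable_induce G s hs
  · refine (DOM_boxProd_le_card G).antisymm ?_
    simpa using card_le_DOM_boxProd_of_colorable_induce G Finset.univ
      (hG.of_hom (Embedding.induce _).toHom)
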